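/- arXiv:2509.15916 — 2 statements merged into one kernel-verified Lean document; each statement's English description precedes it below -/
import Mathlib

section
/- For all integers n ≥ 1 and m ≥ 2, ∫₀¹ Bₙ(x)·Sₘ(x) dx = −sin(πn/2) · n! · ζ(n+m) / (2π)^n. In particular the integral vanishes for even n, and for odd n it equals (−1)^{(n+1)/2} · n! · ζ(n+m) / (2π)^n; when moreover m is even, this exhibits an odd zeta value ζ(n+m) as a Bernoulli–Clausen cross integral. (This is the cross case of the paper's orthogonality lemma producing odd zeta values.) -/
/-!
The series defining `Sₘ` is dominated by `∑ k⁻ᵐ`, so it may be integrated against the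
polynomial `Bₙ` term by term. The `k`-th term `∫₀¹ Bₙ(x) sin(2πkx) dx` is the imaginary part of
the Fourier coefficient `-n!/(-2πik)ⁿ` of `Bₙ`, that is `-sin(πn/2) n!/(2πk)ⁿ`; dividing by `kᵐ`
and summing over `k` produces `ζ(n+m)`.
-/

open Real MeasureTheory

noncomputable def bernoulliPoly (n : ℕ) (x : ℝ) : ℝ :=
  Polynomial.aeval x (Polynomial.bernoulli n)

noncomputable def clausenS (m : ℕ) (x : ℝ) : ℝ :=
  ∑' k : ℕ+, Real.sin (2 * Real.pi * k * x) / (k : ℝ) ^ m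

theorem bernoulliPoly_eq_bernoulliFun (n : ℕ) : bernoulliPoly n = bernoulliFun n := by
  ext x
  rw [bernoulliPoly, bernoulliFun, Polynomial.aeval_def, Polynomial.eval_map]

open Complex in
theorem Complex.im_I_pow (n : ℕ) : (I ^ n).im = Real.sin (π * n / 2) := by
  rw [← exp_pi_div_two_mul_I, ← exp_nat_mul, ← exp_ofReal_mul_I_im]
  push_cast
  ring_nf

/-- For `j = 0` both sides vanish, the right one through `x / 0 = 0`. -/
theorem integral_bernoulliFun_mul_sin {n : ℕ} (hn : n ≠ 0) (j : ℤ) :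
    ∫ x in (0 : ℝ)..1, bernoulliFun n x * Real.sin (2 * π * j * x) =
      -(Real.sin (π * n / 2) * n.factorial) / (2 * π * j) ^ n := by
  -- the integral is the imaginary part of the Fourier coefficient of `Bₙ` at `-j`
  have hcoeff := bernoulliFourierCoeff_eq hn (-j)
  simp only [bernoulliFourierCoeff, fourierCoeffOn_eq_integral _ _ zero_lt_one, neg_neg,
    fourier_coe_apply, sub_zero, Complex.ofReal_one, div_one, one_smul, smul_eq_mul] at hcoeff
  have hint : IntervalIntegrable
      (fun x : ℝ => Complex.exp (2 * π * Complex.I * j * x) * bernoulliFun n x) volume 0 1 :=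
    (by fun_prop : Continuous _).intervalIntegrable 0 1
  calc ∫ x in (0 : ℝ)..1, bernoulliFun n x * Real.sin (2 * π * j * x)
      = ∫ x in (0 : ℝ)..1, (Complex.exp (2 * π * Complex.I * j * x) * bernoulliFun n x).im := by
        refine intervalIntegral.integral_congr fun x _ => ?_
        rw [Complex.im_mul_ofReal, mul_comm, show (2 * π * Complex.I * j * x : ℂ) =
          (2 * π * j * x : ℝ) * Complex.I by push_cast; ring, Complex.exp_ofReal_mul_I_im]
    _ = (-(n.factorial : ℂ) / (2 * π * Complex.I * (-j : ℤ)) ^ n).im := by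
        rw [← hcoeff]; exact intervalIntegral.intervalIntegral_im hint
    _ = _ := by
        rw [show (2 * π * Complex.I * (-j : ℤ) : ℂ) = ((2 * π * j : ℝ) : ℂ) * (-Complex.I) by
            push_cast; ring, mul_pow, show (-Complex.I) ^ n = (Complex.I ^ n)⁻¹ by
            rw [← Complex.inv_I, inv_pow], div_mul_eq_div_div, div_inv_eq_mul,
          ← Complex.ofReal_pow, ← Complex.ofReal_natCast, ← Complex.ofReal_neg, ← Complex.ofReal_div,
          Complex.im_ofReal_mul, Complex.im_I_pow]
        ring

theorem hasSum_intervalIntegral_mul_of_abs_le {ι : Type*} [Countable ι] {g : ℝ → ℝ}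
    {f : ι → ℝ → ℝ} {c : ι → ℝ} (a b : ℝ) (hg : Continuous g) (hf : ∀ i, Continuous (f i))
    (hfc : ∀ i x, |f i x| ≤ c i) (hc : Summable c) :
    HasSum (fun i => ∫ x in a..b, g x * f i x) (∫ x in a..b, g x * ∑' i, f i x) := by
  obtain ⟨C, hC⟩ := (isCompact_uIcc (a := a) (b := b)).exists_bound_of_continuousOn hg.continuousOn
  refine intervalIntegral.hasSum_integral_of_dominated_convergence (fun i _ => C * c i)
    (fun i => (hg.mul (hf i)).aestronglyMeasurable) (fun i => ?_)
    (.of_forall fun _ _ => hc.mul_left C) intervalIntegrable_const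
    (.of_forall fun x _ => (Summable.of_norm_bounded hc (hfc · x)).hasSum.mul_left (g x))
  refine .of_forall fun x hx => ?_
  rw [norm_mul]
  exact mul_le_mul (hC x (Set.uIoc_subset_uIcc hx)) (hfc i x) (norm_nonneg _)
    ((norm_nonneg _).trans (hC x (Set.uIoc_subset_uIcc hx)))

theorem summable_one_div_pnat_pow {s : ℕ} (hs : 1 < s) :
    Summable fun k : ℕ+ => 1 / (k : ℝ) ^ s :=
  summable_pnat_iff_summable_nat.mpr (Real.summable_one_div_nat_pow.mpr hs)

theorem abs_sin_div_pow_le (y : ℝ) {r : ℝ} (hr : 0 < r) (m : ℕ) :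
    |Real.sin y / r ^ m| ≤ 1 / r ^ m := by
  rw [abs_div, abs_of_pos (pow_pos hr m)]
  gcongr
  exact abs_sin_le_one y

theorem hasSum_intervalIntegral_mul_clausenS {g : ℝ → ℝ} {m : ℕ} (a b : ℝ) (hg : Continuous g)
    (hm : 1 < m) :
    HasSum (fun k : ℕ+ => ∫ x in a..b, g x * (Real.sin (2 * π * k * x) / (k : ℝ) ^ m))
      (∫ x in a..b, g x * clausenS m x) :=
  hasSum_intervalIntegral_mul_of_abs_le a b hg (fun _ => by fun_prop)
    (fun k _ => abs_sin_div_pow_le _ (Nat.cast_pos.mpr k.pos) m)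
    (summable_one_div_pnat_pow hm)

theorem riemannZeta_natCast_eq_tsum_pnat {s : ℕ} (hs : 1 < s) :
    riemannZeta s = ((∑' k : ℕ+, 1 / (k : ℝ) ^ s : ℝ) : ℂ) := by
  rw [zeta_nat_eq_tsum_of_gt_one hs, ← tsum_pnat_eq_tsum_of_eq_zero (by simp; omega),
    Complex.ofReal_tsum]
  push_cast
  rfl

/-- Cross case of the orthogonality lemma: for `n ≥ 1`, `m ≥ 2`,
`∫₀¹ Bₙ(x)·Sₘ(x) dx = −sin(πn/2)·n!·ζ(n+m)/(2π)^n`. -/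
theorem bernoulli_clausenS_cross (n m : ℕ) (hn : 1 ≤ n) (hm : 2 ≤ m) :
    ((∫ x in (0:ℝ)..1, bernoulliPoly n x * clausenS m x : ℝ) : ℂ) =
      -(Real.sin (Real.pi * n / 2) : ℂ) * (n.factorial : ℂ) *
        riemannZeta (n + m) / (2 * Real.pi : ℂ) ^ n := by
  have hterm (k : ℕ+) :
      ∫ x in (0 : ℝ)..1, bernoulliPoly n x * (Real.sin (2 * π * k * x) / (k : ℝ) ^ m) =
        -(Real.sin (π * n / 2) * n.factorial) / (2 * π) ^ n * (1 / (k : ℝ) ^ (n + m)) := by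
    have h := integral_bernoulliFun_mul_sin (n := n) (by omega) k
    push_cast at h
    simp_rw [← mul_div_assoc, intervalIntegral.integral_div, bernoulliPoly_eq_bernoulliFun, h]
    field_simp
    ring
  have hsum := hasSum_intervalIntegral_mul_clausenS (g := bernoulliPoly n) 0 1
    (by rw [bernoulliPoly_eq_bernoulliFun]; exact continuous_bernoulliFun n) hm
  simp_rw [hterm] at hsum
  rw [hsum.unique ((summable_one_div_pnat_pow (by omega : 1 < n + m)).hasSum.mul_left _),
    ← Nat.cast_add, riemannZeta_natCast_eq_tsum_pnat (by omega)]
  push_cast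
  ring
end

section
/- Generating function of the Hermite polynomials: for all real x and t, the series ∑_{n=0}^∞ Heₙ(x)·tⁿ/n! converges (HasSum) to exp(x·t − t²/2), where Heₙ is the n-th probabilists' Hermite polynomial. (This is the generating-function identity used in the paper's 'Generating Function Alignment' step; the paper states the physicists' version e^{−t²+2xt} = ∑ Hₘ(x)tᵐ/m!, which is equivalent under the standard rescaling Hₘ(x) = 2^{m/2}·He_m(√2·x).) -/
/-!
`exp (x t - t²/2) = exp (x t) · exp (-t²/2)`, and the Cauchy product of the two exponential
series (the second one read as a power series in `t`, hence supported on even powers) has as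
its `n`-th term `∑_{2j+k=n} (xt)ᵏ/k! · (-t²/2)ʲ/j!`. By the explicit formula
`coeff (He_{2j+k}) k = (-1)ʲ (2j-1)‼ C(2j+k, k)` and `(2j)! = (2j-1)‼ 2ʲ j!`, this is `Heₙ(x) tⁿ/n!`.
-/

open Real Polynomial Finset Function
open scoped Nat

theorem Nat.factorial_two_mul_eq_doubleFactorial_mul (j : ℕ) :
    (2 * j)! = (2 * j - 1)‼ * 2 ^ j * j ! := by
  cases j with
  | zero => rfl
  | succ m =>
    rw [show 2 * (m + 1) - 1 = 2 * m + 1 by omega, show 2 * (m + 1) = 2 * m + 1 + 1 by omega,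
      Nat.factorial_eq_mul_doubleFactorial, show 2 * m + 1 + 1 = 2 * (m + 1) by omega,
      Nat.doubleFactorial_two_mul]
    ac_rfl

theorem HasSum.mul_antidiagonal_of_summable_norm {R : Type*} [NormedRing R] [CompleteSpace R]
    {f g : ℕ → R} {a b : R} (hf : HasSum f a) (hg : HasSum g b)
    (hf' : Summable fun n ↦ ‖f n‖) (hg' : Summable fun n ↦ ‖g n‖) :
    HasSum (fun n ↦ ∑ kl ∈ antidiagonal n, f kl.1 * g kl.2) (a * b) := by
  rw [← hf.tsum_eq, ← hg.tsum_eq,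
    tsum_mul_tsum_eq_tsum_sum_antidiagonal_of_summable_norm hf' hg']
  exact (summable_norm_sum_mul_antidiagonal_of_summable_norm hf' hg').of_norm.hasSum

theorem summable_norm_extend_zero {β γ E : Type*} [SeminormedAddCommGroup E] {g : β → γ}
    (hg : Injective g) {f : β → E} :
    (Summable fun c ↦ ‖extend g f 0 c‖) ↔ Summable fun b ↦ ‖f b‖ := by
  have hzero : (norm ∘ (0 : γ → E)) = 0 := funext fun _ ↦ norm_zero
  simp_rw [apply_extend norm, hzero]
  exact summable_extend_zero hg

noncomputable def evenExpSeries (y : ℝ) : ℕ → ℝ :=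
  extend (2 * ·) (fun j ↦ y ^ j / j !) 0

section evenExpSeries

variable (y : ℝ)

theorem evenExpSeries_two_mul (j : ℕ) : evenExpSeries y (2 * j) = y ^ j / j ! :=
  (mul_right_injective₀ two_ne_zero).extend_apply _ _ j

theorem evenExpSeries_of_odd {n : ℕ} (hn : Odd n) : evenExpSeries y n = 0 :=
  extend_apply' _ _ n fun ⟨j, hj⟩ ↦ Nat.not_even_iff_odd.2 hn ⟨j, by omega⟩

theorem hasSum_evenExpSeries : HasSum (evenExpSeries y) (exp y) :=
  (hasSum_extend_zero (mul_right_injective₀ two_ne_zero)).2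
    (exp_eq_exp_ℝ ▸ NormedSpace.expSeries_div_hasSum_exp y)

theorem summable_norm_evenExpSeries : Summable fun n ↦ ‖evenExpSeries y n‖ :=
  (summable_norm_extend_zero (mul_right_injective₀ two_ne_zero)).2
    (NormedSpace.norm_expSeries_div_summable y)

end evenExpSeries

theorem Polynomial.coeff_hermite_mul_pow_div_factorial (x t : ℝ) (k l : ℕ) :
    ((hermite (k + l)).coeff k : ℝ) * x ^ k * t ^ (k + l) / (k + l)! =
      (x * t) ^ k / k ! * evenExpSeries (-(t ^ 2) / 2) l := by
  rcases Nat.even_or_odd l with ⟨j, rfl⟩ | hl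
  · have hfac := Nat.add_choose_mul_factorial_mul_factorial (2 * j) k
    rw [Nat.factorial_two_mul_eq_doubleFactorial_mul] at hfac
    have hchoose : ((2 * j + k).choose k : ℝ) ≠ 0 := by
      exact_mod_cast (Nat.choose_pos (Nat.le_add_left k _)).ne'
    rw [← two_mul, evenExpSeries_two_mul, add_comm, coeff_hermite_explicit, ← hfac, div_pow,
      neg_pow (t ^ 2), ← pow_mul]
    push_cast
    field_simp
    ring
  · have hodd : Odd (k + l + k) := by
      rw [add_right_comm, ← two_mul, add_comm]
      exact hl.add_even (even_two_mul k)
    rw [coeff_hermite_of_odd_add hodd, evenExpSeries_of_odd _ hl]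
    simp

theorem Polynomial.aeval_hermite_mul_pow_div_factorial (x t : ℝ) (n : ℕ) :
    aeval x (hermite n) * t ^ n / n ! =
      ∑ kl ∈ antidiagonal n, (x * t) ^ kl.1 / kl.1 ! * evenExpSeries (-(t ^ 2) / 2) kl.2 := by
  rw [aeval_eq_sum_range, natDegree_hermite, Nat.sum_antidiagonal_eq_sum_range_succ_mk,
    sum_mul, sum_div]
  refine sum_congr rfl fun k hk ↦ ?_
  obtain ⟨l, rfl⟩ := Nat.exists_eq_add_of_le (Nat.lt_succ_iff.mp (mem_range.mp hk))
  simpa [zsmul_eq_mul, mul_assoc] using coeff_hermite_mul_pow_div_factorial x t k l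

/-- Generating function of the probabilists' Hermite polynomials:
`∑_{n=0}^∞ Heₙ(x)·tⁿ/n! = exp(x·t − t²/2)`. -/
theorem hermite_generating_function (x t : ℝ) :
    HasSum (fun n : ℕ => (Polynomial.aeval x (Polynomial.hermite n) : ℝ) * t ^ n / n.factorial)
      (Real.exp (x * t - t ^ 2 / 2)) := by
  have hexp : HasSum (fun n ↦ (x * t) ^ n / n !) (exp (x * t)) :=
    exp_eq_exp_ℝ ▸ NormedSpace.expSeries_div_hasSum_exp (x * t)
  have hprod := hexp.mul_antidiagonal_of_summable_norm (hasSum_evenExpSeries (-(t ^ 2) / 2))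
    (NormedSpace.norm_expSeries_div_summable _) (summable_norm_evenExpSeries _)
  rw [← exp_add, show x * t + -(t ^ 2) / 2 = x * t - t ^ 2 / 2 by ring] at hprod
  simpa only [aeval_hermite_mul_pow_div_factorial] using hprod
end
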